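/- For every S-CORE term P and states σ, τ under the R-semantics, ⟨P, σ⟩ ⇓ τ if and only if ⟨inv P, τ⟩ ⇓ σ. -/

import Mathlib

def push : ℤ × List ℤ × ℕ → ℤ × List ℤ × ℕ
  | (v, t, 0) => (0, v::t, 0)
  | (0, v::t, c+1) => (0, v::t, c+1)
  | (u, s, c+1) => (u, s, c)

def pop : ℤ × List ℤ × ℕ → ℤ × List ℤ × ℕ
  | (0, v::t, 0) => (v, t, 0)
  | (0, v::t, c+1) => (0, v::t, c+1)
  | (u, s, c) => (u, s, c+1)

inductive Term where
  | skip : Term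
  | inc : String → Term
  | dec : String → Term
  | push : String → Term
  | pop : String → Term
  | seq : Term → Term → Term
  | forLoop : String → Term → Term

def inv : Term → Term
  | .skip => .skip
  | .inc x => .dec x
  | .dec x => .inc x
  | .push x => .pop x
  | .pop x => .push x
  | .seq p q => .seq (inv q) (inv p)
  | .forLoop x p => .forLoop x (inv p)

def occurs (x : String) : Term → Prop
  | .skip => False
  | .inc y => x = y
  | .dec y => x = y
  | .push y => x = y
  | .pop y => x = y
  | .seq p q => occurs x p ∨ occurs x q
  | .forLoop y p => x = y ∨ occurs x p

/-- Well-formed terms: the leading variable of a `FOR` never occurs in its body. -/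
def WF : Term → Prop
  | .seq p q => WF p ∧ WF q
  | .forLoop x p => ¬ occurs x p ∧ WF p
  | _ => True

abbrev State := String → ℤ × List ℤ × ℕ

def upd (σ : State) (x : String) (p : ℤ × List ℤ × ℕ) : State :=
  fun y => if y = x then p else σ y

mutual
/-- The big-step R-semantics of S-CORE. -/
inductive Bigstep : Term → State → State → Prop where
  | skip (σ) : Bigstep .skip σ σ
  | inc (x σ) : Bigstep (.inc x) σ (upd σ x ((σ x).1 + 1, (σ x).2.1, (σ x).2.2))
  | dec (x σ) : Bigstep (.dec x) σ (upd σ x ((σ x).1 - 1, (σ x).2.1, (σ x).2.2))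
  | push (x σ) : Bigstep (.push x) σ (upd σ x (_root_.push (σ x)))
  | pop (x σ) : Bigstep (.pop x) σ (upd σ x (_root_.pop (σ x)))
  | seq {p q σ ν τ} : Bigstep p σ ν → Bigstep q ν τ → Bigstep (.seq p q) σ τ
  | forFwd {x p σ τ} : (σ x).1 ≥ 0 → Iter p (σ x).1.toNat σ τ →
      Bigstep (.forLoop x p) σ τ
  | forBwd {x p σ τ} : (σ x).1 < 0 → Iter (inv p) (-(σ x).1).toNat σ τ →
      Bigstep (.forLoop x p) σ τ

/-- `Iter p n σ τ`: `n`-fold iteration of `p` takes `σ` to `τ`. -/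
inductive Iter : Term → ℕ → State → State → Prop where
  | base (p σ) : Iter p 0 σ σ
  | step {p n σ ν τ} : Bigstep p σ ν → Iter p n ν τ → Iter p (n+1) σ τ
end

/-
Every derivation can be run backwards. Atomic steps are undone by their inverse instructions
(`push` and `pop` being mutually inverse), a sequence is undone in reverse order, and a loop
`FOR x {P}` does not modify `x`, since `x` does not occur in `P`; so the final state prescribes the
same iteration count and sign, and the iterations are undone one by one, last first. The converse
follows by applying this to `inv P`, which is again well formed, with `inv (inv P) = P`.
-/

theorem Term.inv_inv (p : Term) : inv (inv p) = p := by
  induction p <;> simp [inv, *]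

theorem Term.occurs_inv {x : String} {p : Term} : occurs x (inv p) ↔ occurs x p := by
  induction p <;> simp [inv, occurs, or_comm, *]

theorem WF.inv {p : Term} (hp : WF p) : WF (inv p) := by
  induction p <;> simp_all [_root_.inv, WF, Term.occurs_inv]

theorem pop_push (s : ℤ × List ℤ × ℕ) : pop (push s) = s := by
  rcases s with ⟨v, _ | ⟨w, t⟩, _ | c⟩ <;> by_cases hv : v = 0 <;> simp [push, pop, hv]

theorem push_pop (s : ℤ × List ℤ × ℕ) : push (pop s) = s := by
  rcases s with ⟨v, _ | ⟨w, t⟩, _ | c⟩ <;> by_cases hv : v = 0 <;> simp [push, pop, hv]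

@[simp]
theorem upd_apply_self (σ : State) (x : String) (a : ℤ × List ℤ × ℕ) : upd σ x a x = a :=
  if_pos rfl

@[simp]
theorem upd_upd (σ : State) (x : String) (a b : ℤ × List ℤ × ℕ) :
    upd (upd σ x a) x b = upd σ x b := by
  funext y
  by_cases hy : y = x <;> simp [upd, hy]

@[simp]
theorem upd_apply_eq_self (σ : State) (x : String) : upd σ x (σ x) = σ := by
  funext y
  by_cases hy : y = x <;> simp [upd, hy]

theorem Iter.snoc {p : Term} {n : ℕ} {σ ν τ : State} (hi : Iter p n σ ν) (hb : Bigstep p ν τ) :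
    Iter p (n + 1) σ τ := by
  induction n generalizing σ with
  | zero => cases hi; exact .step hb (.base _ _)
  | succ n ih => cases hi with
    | step hb' hi' => exact .step hb' (ih hi')

mutual
theorem Bigstep.apply_eq_of_not_occurs {x : String} :
    {p : Term} → {σ τ : State} → Bigstep p σ τ → ¬ occurs x p → τ x = σ x
  | _, _, _, .skip _, _ => rfl
  | _, _, _, .inc _ _, hx => if_neg hx
  | _, _, _, .dec _ _, hx => if_neg hx
  | _, _, _, .push _ _, hx => if_neg hx
  | _, _, _, .pop _ _, hx => if_neg hx
  | _, _, _, .seq h₁ h₂, hx =>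
    (h₂.apply_eq_of_not_occurs fun h => hx (.inr h)).trans
      (h₁.apply_eq_of_not_occurs fun h => hx (.inl h))
  | _, _, _, .forFwd _ hi, hx => hi.apply_eq_of_not_occurs fun h => hx (.inr h)
  | _, _, _, .forBwd _ hi, hx =>
    hi.apply_eq_of_not_occurs fun h => hx (.inr (Term.occurs_inv.1 h))

theorem Iter.apply_eq_of_not_occurs {x : String} :
    {p : Term} → {n : ℕ} → {σ τ : State} → Iter p n σ τ → ¬ occurs x p → τ x = σ x
  | _, _, _, _, .base _ _, _ => rfl
  | _, _, _, _, .step hb hi, hx =>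
    (hi.apply_eq_of_not_occurs hx).trans (hb.apply_eq_of_not_occurs hx)
end

mutual
theorem Bigstep.reverse :
    {p : Term} → {σ τ : State} → Bigstep p σ τ → WF p → Bigstep (inv p) τ σ
  | _, _, _, .skip σ, _ => .skip σ
  | _, _, _, .inc x σ, _ => by
    simpa [inv] using Bigstep.dec x (upd σ x ((σ x).1 + 1, (σ x).2.1, (σ x).2.2))
  | _, _, _, .dec x σ, _ => by
    simpa [inv] using Bigstep.inc x (upd σ x ((σ x).1 - 1, (σ x).2.1, (σ x).2.2))
  | _, _, _, .push x σ, _ => by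
    simpa [inv, pop_push] using Bigstep.pop x (upd σ x (push (σ x)))
  | _, _, _, .pop x σ, _ => by
    simpa [inv, push_pop] using Bigstep.push x (upd σ x (pop (σ x)))
  | _, _, _, .seq h₁ h₂, ⟨hp, hq⟩ => .seq (h₂.reverse hq) (h₁.reverse hp)
  | _, _, _, .forFwd hge hi, ⟨hx, hp⟩ => by
    have hτ := hi.apply_eq_of_not_occurs hx
    exact .forFwd (hτ ▸ hge) (hτ ▸ hi.reverse hp)
  | _, _, _, .forBwd hlt hi, ⟨hx, hp⟩ => by
    have hτ := hi.apply_eq_of_not_occurs (mt Term.occurs_inv.1 hx)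
    exact .forBwd (hτ ▸ hlt) (by simpa [Term.inv_inv, hτ] using hi.reverse hp.inv)

theorem Iter.reverse :
    {p : Term} → {n : ℕ} → {σ τ : State} → Iter p n σ τ → WF p → Iter (inv p) n τ σ
  | _, _, _, _, .base _ σ, _ => .base _ σ
  | _, _, _, _, .step hb hi, hp => (hi.reverse hp).snoc (hb.reverse hp)
end

theorem rsem_weakly_reversible (P : Term) (hP : WF P) (σ τ : State) :
    Bigstep P σ τ ↔ Bigstep (inv P) τ σ :=
  ⟨fun h => h.reverse hP, fun h => Term.inv_inv P ▸ h.reverse hP.inv⟩
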